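/- Let 0 ≤ β ≤ α ≤ 1. For all i, i' ∈ I such that Q_i ∩ Q_{i'} ≠ ∅, the operator norm satisfies ‖T_i^{−1} T_{i'}‖ ≤ 104, where ‖·‖ denotes the operator norm on 2×2 real matrices induced by the Euclidean norm on ℝ². -/

import Mathlib

noncomputable section

open Real Set MeasureTheory Pointwise
open scoped ENNReal

/-- `ℝ²` with the Euclidean norm. -/
abbrev R2 : Type := EuclideanSpace ℝ (Fin 2)

/-- The vector `(a, b) ∈ ℝ²`. -/
def vec2 (a b : ℝ) : R2 := (EuclideanSpace.equiv (Fin 2) ℝ).symm ![a, b]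

/-- Action of a `2×2` matrix on `ℝ²`. -/
def mulV (M : Matrix (Fin 2) (Fin 2) ℝ) (x : R2) : R2 :=
  (EuclideanSpace.equiv (Fin 2) ℝ).symm (M.mulVec ((EuclideanSpace.equiv (Fin 2) ℝ) x))

/-- Rotation matrix through the angle `θ`. -/
def Rmat (θ : ℝ) : Matrix (Fin 2) (Fin 2) ℝ :=
  !![Real.cos θ, -Real.sin θ; Real.sin θ, Real.cos θ]

/-- The diagonal matrix `A_j = diag(2^{αj}, 2^{βj})`. -/
def Amat (α β : ℝ) (j : ℕ) : Matrix (Fin 2) (Fin 2) ℝ :=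
  !![(2:ℝ) ^ (α * (j:ℝ)), 0; 0, (2:ℝ) ^ (β * (j:ℝ))]

/-- The angle `Θ_{j,ℓ} = 2ℓ·(π/N)·2^{(β − 1)j}`, with `N = 10`. -/
def Theta (β : ℝ) (j ℓ : ℕ) : ℝ :=
  2 * (ℓ:ℝ) * (Real.pi / 10) * (2:ℝ) ^ ((β - 1) * (j:ℝ))

/-- The translation `c_{j,m} = (2^{j−1} + m·2^{αj}, 0)ᵗ`. -/
def cvec (α : ℝ) (j m : ℕ) : R2 :=
  vec2 ((2:ℝ) ^ ((j:ℝ) - 1) + (m:ℝ) * (2:ℝ) ^ (α * (j:ℝ))) 0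

/-- The base set `Q = (−ε, 1+ε) × (−1−ε, 1+ε)`. -/
def baseQ (ε : ℝ) : Set R2 :=
  {x : R2 | x 0 ∈ Set.Ioo (-ε) (1+ε) ∧ x 1 ∈ Set.Ioo (-1-ε) (1+ε)}

/-- `m_j^max = ⌈2^{(1−α)j−1}⌉`. -/
def mjmax (α : ℝ) (j : ℕ) : ℤ := ⌈(2:ℝ) ^ ((1-α) * (j:ℝ) - 1)⌉

/-- `ℓ_j^max = ⌈N·2^{(1−β)j}⌉`, with `N = 10`. -/
def ljmax (β : ℝ) (j : ℕ) : ℤ := ⌈(10:ℝ) * (2:ℝ) ^ ((1-β) * (j:ℝ))⌉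

/-- Membership of a triple `(j,m,ℓ)` in the index set
`I₀ = {(j,m,ℓ) ∈ ℕ × ℕ₀ × ℕ₀ : m ≤ m_j^max, ℓ ≤ ℓ_j^max}` (with `ℕ = {1,2,…}`). -/
def memI0 (α β : ℝ) (i : ℕ × ℕ × ℕ) : Prop :=
  1 ≤ i.1 ∧ (i.2.1 : ℤ) ≤ mjmax α i.1 ∧ (i.2.2 : ℤ) ≤ ljmax β i.1

/-- The set `Q_{j,m,ℓ} = R_{j,ℓ}(A_j·Q + c_{j,m})`. -/
def Qset (α β ε : ℝ) (j m ℓ : ℕ) : Set R2 :=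
  (fun x => mulV (Rmat (Theta β j ℓ)) (mulV (Amat α β j) x + cvec α j m)) '' baseQ ε

/-- The index set `I = {0} ∪ I₀`: `none` plays the role of the index `0`. -/
abbrev Idx : Type := Option (ℕ × ℕ × ℕ)

/-- Membership in `I = {0} ∪ I₀`. -/
def memI (α β : ℝ) : Idx → Prop
  | none => True
  | some i => memI0 α β i

/-- The family `(Q_i)_{i ∈ I}`, where `Q₀ = B₄(0)` is the open Euclidean ball of
radius `4` about the origin. -/
def QsetI (α β ε : ℝ) : Idx → Set R2
  | none => Metric.ball (0:R2) 4
  | some (j, m, ℓ) => Qset α β ε j m ℓ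

/-- The invertible matrices `T_i`: `T_{j,m,ℓ} = R_{j,ℓ}·A_j` for `(j,m,ℓ) ∈ I₀` and
`T₀ = id`. -/
def Tmat (α β : ℝ) : Idx → Matrix (Fin 2) (Fin 2) ℝ
  | none => 1
  | some (j, _, ℓ) => Rmat (Theta β j ℓ) * Amat α β j

/-! Every `T_i` has the form `R_θ · diag(a, b)` (with `T₀ = R_0 · diag(1, 1)`), so `T_i⁻¹ T_{i'}`
has entries `(a'/a) cos φ`, `(b'/a) sin φ`, `(a'/b) sin φ`, `(b'/b) cos φ` where `φ = θ' - θ`,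
and its operator norm is at most its Frobenius norm. A point of `Q_{j,m,ℓ}` is `R_θ u` with
`u₀ ≍ 2^j` and `|u₁| ≲ 2^{βj}`. Hence the norms of the points of two intersecting packets force
`j' ≤ j + 2`, i.e. `a' ≤ 4a` and `b' ≤ 4b`; and writing the same point in both frames gives
`|sin φ| · 2^j ≲ 2^{βj}`, which controls the off-diagonal entries. Only packets with `j ≤ 3`
meet `Q₀ = B₄(0)`. -/

theorem Matrix.norm_toEuclideanCLM_le_of_sum_sq_le {n : Type*} [Fintype n] [DecidableEq n]
    (M : Matrix n n ℝ) {C : ℝ} (hC : 0 ≤ C) (h : ∑ i, ∑ k, M i k ^ 2 ≤ C ^ 2) :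
    ‖Matrix.toEuclideanCLM (𝕜 := ℝ) M‖ ≤ C := by
  refine ContinuousLinearMap.opNorm_le_bound _ hC fun x => ?_
  refine (sq_le_sq₀ (norm_nonneg _) (by positivity)).mp ?_
  simp only [EuclideanSpace.norm_sq_eq, mul_pow, Matrix.ofLp_toEuclideanCLM, Matrix.mulVec,
    dotProduct, Real.norm_eq_abs, sq_abs]
  calc ∑ i, (∑ k, M i k * x k) ^ 2 ≤ ∑ i, (∑ k, M i k ^ 2) * ∑ k, x k ^ 2 :=
        Finset.sum_le_sum fun i _ => Finset.sum_mul_sq_le_sq_mul_sq _ _ _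
    _ ≤ C ^ 2 * ∑ k, x k ^ 2 := by rw [← Finset.sum_mul]; gcongr

theorem norm_toEuclideanCLM_fin_two_le {p q r s C : ℝ} (hC : 0 ≤ C)
    (h : p ^ 2 + q ^ 2 + r ^ 2 + s ^ 2 ≤ C ^ 2) :
    ‖Matrix.toEuclideanCLM (𝕜 := ℝ) !![p, q; r, s]‖ ≤ C :=
  Matrix.norm_toEuclideanCLM_le_of_sum_sq_le _ hC <| by
    simpa [Fin.sum_univ_two, add_assoc] using h

theorem mulV_eq_toEuclideanCLM (M : Matrix (Fin 2) (Fin 2) ℝ) (x : R2) :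
    mulV M x = Matrix.toEuclideanCLM (𝕜 := ℝ) M x :=
  rfl

theorem mulV_apply (M : Matrix (Fin 2) (Fin 2) ℝ) (x : R2) (k : Fin 2) :
    mulV M x k = M k 0 * x 0 + M k 1 * x 1 := by
  fin_cases k <;> simp [mulV, EuclideanSpace.equiv]

theorem mulV_mul (M N : Matrix (Fin 2) (Fin 2) ℝ) (x : R2) :
    mulV (M * N) x = mulV M (mulV N x) := by
  simp only [mulV_eq_toEuclideanCLM, map_mul]
  rfl

theorem mulV_one (x : R2) : mulV 1 x = x := by
  simp [mulV_eq_toEuclideanCLM]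

theorem R2.norm_sq_eq (x : R2) : ‖x‖ ^ 2 = x 0 ^ 2 + x 1 ^ 2 := by
  simp [EuclideanSpace.norm_sq_eq, Fin.sum_univ_two]

theorem Rmat_add (θ φ : ℝ) : Rmat (θ + φ) = Rmat θ * Rmat φ := by
  ext i k
  fin_cases i <;> fin_cases k <;> simp [Rmat, Real.cos_add, Real.sin_add] <;> ring

theorem Rmat_zero : Rmat 0 = 1 := by
  ext i k
  fin_cases i <;> fin_cases k <;> simp [Rmat]

theorem norm_mulV_Rmat (θ : ℝ) (x : R2) : ‖mulV (Rmat θ) x‖ = ‖x‖ := by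
  refine (sq_eq_sq₀ (norm_nonneg _) (norm_nonneg _)).mp ?_
  simp only [R2.norm_sq_eq, mulV_apply, Rmat, Matrix.of_apply, Matrix.cons_val',
    Matrix.cons_val_zero, Matrix.cons_val_one, Matrix.cons_val_fin_one]
  linear_combination (x 0 ^ 2 + x 1 ^ 2) * Real.sin_sq_add_cos_sq θ

theorem mulV_Rmat_sub_of_eq {θ θ' : ℝ} {u v : R2} (h : mulV (Rmat θ) u = mulV (Rmat θ') v) :
    mulV (Rmat (θ - θ')) u = v := by
  rw [sub_eq_neg_add, Rmat_add, mulV_mul, h, ← mulV_mul, ← Rmat_add, neg_add_cancel, Rmat_zero,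
    mulV_one]

theorem inv_Rmat_mul_diag {a b : ℝ} (ha : a ≠ 0) (hb : b ≠ 0) (θ : ℝ) :
    (Rmat θ * !![a, 0; 0, b])⁻¹ = !![a⁻¹, 0; 0, b⁻¹] * Rmat (-θ) := by
  refine Matrix.inv_eq_left_inv ?_
  rw [Matrix.mul_assoc, ← Matrix.mul_assoc (Rmat _), ← Rmat_add, neg_add_cancel, Rmat_zero,
    Matrix.one_mul]
  ext i k
  fin_cases i <;> fin_cases k <;> simp [ha, hb]

theorem inv_Rmat_mul_diag_mul_Rmat_mul_diag {a b : ℝ} (ha : a ≠ 0) (hb : b ≠ 0)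
    (θ θ' a' b' : ℝ) :
    (Rmat θ * !![a, 0; 0, b])⁻¹ * (Rmat θ' * !![a', 0; 0, b']) =
      !![a⁻¹ * Real.cos (θ' - θ) * a', -(a⁻¹ * Real.sin (θ' - θ) * b');
        b⁻¹ * Real.sin (θ' - θ) * a', b⁻¹ * Real.cos (θ' - θ) * b'] := by
  rw [inv_Rmat_mul_diag ha hb, Matrix.mul_assoc, ← Matrix.mul_assoc (Rmat _), ← Rmat_add,
    neg_add_eq_sub]
  ext i k
  fin_cases i <;> fin_cases k <;> simp [Rmat] <;> ring

theorem norm_inv_Rmat_mul_diag_mul_le {a b a' b' θ θ' : ℝ} (ha : 0 < a) (hb : 0 < b)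
    (ha' : 0 < a') (hb' : 0 < b') (haa : a' ≤ 8 * a) (hbb : b' ≤ 8 * b)
    (hsa : |Real.sin (θ' - θ)| * a' ≤ 48 * b) (hsb : |Real.sin (θ' - θ)| * b' ≤ 48 * a) :
    ‖Matrix.toEuclideanCLM (𝕜 := ℝ)
      ((Rmat θ * !![a, 0; 0, b])⁻¹ * (Rmat θ' * !![a', 0; 0, b']))‖ ≤ 104 := by
  rw [inv_Rmat_mul_diag_mul_Rmat_mul_diag ha.ne' hb.ne']
  set φ := θ' - θ
  have r1 : a' / a ≤ 8 := (div_le_iff₀ ha).2 haa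
  have r2 : b' / b ≤ 8 := (div_le_iff₀ hb).2 hbb
  have r3 : |Real.sin φ| * (a' / b) ≤ 48 := by rw [← mul_div_assoc, div_le_iff₀ hb]; exact hsa
  have r4 : |Real.sin φ| * (b' / a) ≤ 48 := by rw [← mul_div_assoc, div_le_iff₀ ha]; exact hsb
  refine norm_toEuclideanCLM_fin_two_le (by norm_num) ?_
  calc (a⁻¹ * Real.cos φ * a') ^ 2 + (-(a⁻¹ * Real.sin φ * b')) ^ 2
        + (b⁻¹ * Real.sin φ * a') ^ 2 + (b⁻¹ * Real.cos φ * b') ^ 2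
      = Real.cos φ ^ 2 * (a' / a) ^ 2 + (|Real.sin φ| * (b' / a)) ^ 2
        + (|Real.sin φ| * (a' / b)) ^ 2 + Real.cos φ ^ 2 * (b' / b) ^ 2 := by
        simp only [mul_pow, sq_abs, neg_sq, div_eq_inv_mul]; ring
    _ ≤ 1 * 8 ^ 2 + 48 ^ 2 + 48 ^ 2 + 1 * 8 ^ 2 := by
        gcongr
        all_goals exact Real.cos_sq_le_one φ
    _ ≤ 104 ^ 2 := by norm_num

theorem two_rpow_natCast_sub_one (j : ℕ) : (2 : ℝ) ^ ((j : ℝ) - 1) = 2 ^ j / 2 := by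
  rw [Real.rpow_sub two_pos, Real.rpow_one, Real.rpow_natCast]

theorem two_rpow_mul_le_two_pow {γ : ℝ} (hγ : γ ≤ 1) (j : ℕ) :
    (2 : ℝ) ^ (γ * j) ≤ 2 ^ j := by
  rw [← Real.rpow_natCast]
  exact Real.rpow_le_rpow_of_exponent_le one_le_two (mul_le_of_le_one_left (by positivity) hγ)

theorem two_rpow_mul_le_of_le_add_two {γ : ℝ} (hγ0 : 0 ≤ γ) (hγ1 : γ ≤ 1) {j j' : ℕ}
    (h : j' ≤ j + 2) : (2 : ℝ) ^ (γ * j') ≤ 4 * 2 ^ (γ * j) := by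
  have hexp : γ * j' ≤ γ * j + 2 := by
    have : (j' : ℝ) ≤ j + 2 := by exact_mod_cast h
    nlinarith
  calc (2 : ℝ) ^ (γ * j') ≤ 2 ^ (γ * j + 2) :=
        Real.rpow_le_rpow_of_exponent_le one_le_two hexp
    _ = 4 * 2 ^ (γ * j) := by rw [Real.rpow_add two_pos]; norm_num; ring

theorem natCast_mul_two_rpow_le {α : ℝ} {j m : ℕ} (hm : (m : ℤ) ≤ mjmax α j) :
    (m : ℝ) * 2 ^ (α * j) ≤ 2 ^ j / 2 + 2 ^ (α * j) := by
  have hm' : (m : ℝ) ≤ 2 ^ ((1 - α) * j - 1) + 1 :=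
    (Int.cast_le.2 hm).trans (Int.ceil_lt_add_one _).le
  have hsplit : (2 : ℝ) ^ ((1 - α) * j - 1) * 2 ^ (α * j) = 2 ^ j / 2 := by
    rw [← Real.rpow_add two_pos, ← two_rpow_natCast_sub_one]; ring_nf
  calc (m : ℝ) * 2 ^ (α * j) ≤ (2 ^ ((1 - α) * j - 1) + 1) * 2 ^ (α * j) := by gcongr
    _ = 2 ^ j / 2 + 2 ^ (α * j) := by rw [add_mul, hsplit, one_mul]

theorem exists_eq_mulV_Rmat_of_mem_Qset {α β ε : ℝ} (hα1 : α ≤ 1) (hε : ε < 1 / 32)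
    {j m ℓ : ℕ} (hm : (m : ℤ) ≤ mjmax α j) {p : R2} (hp : p ∈ Qset α β ε j m ℓ) :
    ∃ u : R2, p = mulV (Rmat (Theta β j ℓ)) u ∧
      15 / 32 * 2 ^ j ≤ u 0 ∧ u 0 ≤ 97 / 32 * 2 ^ j ∧ |u 1| ≤ 33 / 32 * 2 ^ (β * j) := by
  obtain ⟨x, ⟨⟨hx0l, hx0u⟩, hx1l, hx1u⟩, rfl⟩ := hp
  refine ⟨_, rfl, ?_⟩
  have hu0 : (mulV (Amat α β j) x + cvec α j m) 0 =
      2 ^ (α * j) * x 0 + (2 ^ j / 2 + m * 2 ^ (α * j)) := by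
    simp [mulV_apply, Amat, cvec, vec2, two_rpow_natCast_sub_one]
  have hu1 : (mulV (Amat α β j) x + cvec α j m) 1 = 2 ^ (β * j) * x 1 := by
    simp [mulV_apply, Amat, cvec, vec2]
  rw [hu0, hu1]
  have ha : (0 : ℝ) < 2 ^ (α * j) := by positivity
  have hb : (0 : ℝ) < 2 ^ (β * j) := by positivity
  have haP := two_rpow_mul_le_two_pow hα1 j
  have hmP := natCast_mul_two_rpow_le hm
  have hm0 : (0 : ℝ) ≤ m * 2 ^ (α * j) := by positivity
  refine ⟨by nlinarith, by nlinarith, ?_⟩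
  rw [abs_mul, abs_of_pos hb, mul_comm]
  gcongr
  exact abs_le.2 ⟨by linarith, by linarith⟩

theorem norm_mem_Qset_bounds {α β ε : ℝ} (hβ1 : β ≤ 1) (hα1 : α ≤ 1) (hε : ε < 1 / 32)
    {j m ℓ : ℕ} (hm : (m : ℤ) ≤ mjmax α j) {p : R2} (hp : p ∈ Qset α β ε j m ℓ) :
    15 / 32 * 2 ^ j ≤ ‖p‖ ∧ ‖p‖ ≤ 7 / 2 * 2 ^ j := by
  obtain ⟨u, rfl, hu0l, hu0u, hu1⟩ := exists_eq_mulV_Rmat_of_mem_Qset hα1 hε hm hp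
  rw [norm_mulV_Rmat]
  have hnorm := R2.norm_sq_eq u
  have hu1sq : u 1 ^ 2 ≤ (33 / 32 * 2 ^ j) ^ 2 := by
    rw [← sq_abs]
    gcongr
    exact hu1.trans (by gcongr; exact two_rpow_mul_le_two_pow hβ1 j)
  constructor
  · refine (sq_le_sq₀ (by positivity) (norm_nonneg _)).1 ?_
    nlinarith
  · refine (sq_le_sq₀ (norm_nonneg _) (by positivity)).1 ?_
    nlinarith

theorem le_add_two_of_mem_Qset_inter {α β ε : ℝ} (hβ1 : β ≤ 1) (hα1 : α ≤ 1) (hε : ε < 1 / 32)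
    {j m ℓ j' m' ℓ' : ℕ} (hm : (m : ℤ) ≤ mjmax α j) (hm' : (m' : ℤ) ≤ mjmax α j') {p : R2}
    (hp : p ∈ Qset α β ε j m ℓ) (hp' : p ∈ Qset α β ε j' m' ℓ') : j' ≤ j + 2 := by
  have hle := (norm_mem_Qset_bounds hβ1 hα1 hε hm' hp').1.trans
    (norm_mem_Qset_bounds hβ1 hα1 hε hm hp).2
  have hlt : (2 : ℝ) ^ j' < 2 ^ (j + 3) := by
    rw [pow_add]; nlinarith [pow_pos (two_pos : (0 : ℝ) < 2) j]
  have := (pow_lt_pow_iff_right₀ one_lt_two).1 hlt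
  omega

theorem le_three_of_mem_ball_inter_Qset {α β ε : ℝ} (hβ1 : β ≤ 1) (hα1 : α ≤ 1)
    (hε : ε < 1 / 32) {j m ℓ : ℕ} (hm : (m : ℤ) ≤ mjmax α j) {p : R2} (hp : ‖p‖ < 4)
    (hp' : p ∈ Qset α β ε j m ℓ) : j ≤ 3 := by
  have hle := (norm_mem_Qset_bounds hβ1 hα1 hε hm hp').1
  have hlt : (2 : ℝ) ^ j < 2 ^ 4 := by nlinarith
  have := (pow_lt_pow_iff_right₀ one_lt_two).1 hlt
  omega

theorem abs_sin_mul_le_of_mem_Qset_inter {α β ε : ℝ} (hβ0 : 0 ≤ β) (hβ1 : β ≤ 1)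
    (hα1 : α ≤ 1) (hε : ε < 1 / 32) {j m ℓ j' m' ℓ' : ℕ} (hm : (m : ℤ) ≤ mjmax α j)
    (hm' : (m' : ℤ) ≤ mjmax α j') {p : R2} (hp : p ∈ Qset α β ε j m ℓ)
    (hp' : p ∈ Qset α β ε j' m' ℓ') :
    |Real.sin (Theta β j' ℓ' - Theta β j ℓ)| * 2 ^ j ≤ 11 * 2 ^ (β * j) := by
  have hb' := two_rpow_mul_le_of_le_add_two hβ0 hβ1
    (le_add_two_of_mem_Qset_inter hβ1 hα1 hε hm hm' hp hp')
  obtain ⟨u, rfl, hu0l, -, hu1⟩ := exists_eq_mulV_Rmat_of_mem_Qset hα1 hε hm hp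
  obtain ⟨v, hv, -, -, hv1⟩ := exists_eq_mulV_Rmat_of_mem_Qset hα1 hε hm' hp'
  set φ := Theta β j ℓ - Theta β j' ℓ'
  have hrot : Real.sin φ * u 0 = v 1 - Real.cos φ * u 1 := by
    rw [← mulV_Rmat_sub_of_eq hv, mulV_apply]
    simp [Rmat, φ]
  have hu0 : 0 ≤ u 0 := le_trans (by positivity) hu0l
  have hsin : |Real.sin φ| * u 0 ≤ |v 1| + |u 1| :=
    calc |Real.sin φ| * u 0 = |v 1 - Real.cos φ * u 1| := by
          rw [← hrot, abs_mul, abs_of_nonneg hu0]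
      _ ≤ |v 1| + |Real.cos φ| * |u 1| := (abs_sub _ _).trans_eq (by rw [abs_mul])
      _ ≤ |v 1| + |u 1| := by
          gcongr; exact mul_le_of_le_one_left (abs_nonneg _) (abs_cos_le_one φ)
  rw [← neg_sub, Real.sin_neg, abs_neg]
  nlinarith [abs_nonneg (Real.sin φ)]

theorem Tmat_none (α β : ℝ) : Tmat α β none = Rmat 0 * !![1, 0; 0, 1] := by
  rw [Rmat_zero, Matrix.one_mul, ← Matrix.one_fin_two]
  rfl

theorem norm_transition_Qset_Qset_le {α β ε : ℝ} (hβ0 : 0 ≤ β) (hβα : β ≤ α) (hα1 : α ≤ 1)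
    (hε : ε < 1 / 32) {j m ℓ j' m' ℓ' : ℕ} (hm : (m : ℤ) ≤ mjmax α j)
    (hm' : (m' : ℤ) ≤ mjmax α j') {p : R2} (hp : p ∈ Qset α β ε j m ℓ)
    (hp' : p ∈ Qset α β ε j' m' ℓ') :
    ‖Matrix.toEuclideanCLM (𝕜 := ℝ)
      ((Tmat α β (some (j, m, ℓ)))⁻¹ * Tmat α β (some (j', m', ℓ')))‖ ≤ 104 := by
  have hβ1 := hβα.trans hα1
  have hjj := le_add_two_of_mem_Qset_inter hβ1 hα1 hε hm hm' hp hp'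
  have hsin := abs_sin_mul_le_of_mem_Qset_inter hβ0 hβ1 hα1 hε hm hm' hp hp'
  have ha' := two_rpow_mul_le_of_le_add_two (hβ0.trans hβα) hα1 hjj
  have hb' := two_rpow_mul_le_of_le_add_two hβ0 hβ1 hjj
  have haP' : (2 : ℝ) ^ (α * j') ≤ 4 * 2 ^ j :=
    (two_rpow_mul_le_two_pow hα1 j').trans <| by
      rw [mul_comm, show (4 : ℝ) = 2 ^ 2 by norm_num, ← pow_add]
      exact pow_le_pow_right₀ one_le_two hjj
  have hbP : (2 : ℝ) ^ (β * j) ≤ 2 ^ j := two_rpow_mul_le_two_pow hβ1 j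
  have hba : (2 : ℝ) ^ (β * j) ≤ 2 ^ (α * j) :=
    Real.rpow_le_rpow_of_exponent_le one_le_two (by gcongr)
  have ha : (0 : ℝ) < 2 ^ (α * j) := by positivity
  have hb : (0 : ℝ) < 2 ^ (β * j) := by positivity
  set s := |Real.sin (Theta β j' ℓ' - Theta β j ℓ)|
  have hsP : s * (4 * 2 ^ j) ≤ 44 * 2 ^ (β * j) := by linarith [mul_left_comm s 4 (2 ^ j)]
  refine norm_inv_Rmat_mul_diag_mul_le ha hb (by positivity) (by positivity) (by linarith)
    (by linarith) ?_ ?_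
  · calc _ ≤ s * (4 * 2 ^ j) := by gcongr
      _ ≤ 48 * 2 ^ (β * j) := by linarith
  · calc _ ≤ s * (4 * 2 ^ j) := by gcongr; linarith
      _ ≤ 48 * 2 ^ (α * j) := by linarith

theorem norm_transition_Qset_ball_le {α β : ℝ} (hβ0 : 0 ≤ β) (hβα : β ≤ α) (j m ℓ : ℕ) :
    ‖Matrix.toEuclideanCLM (𝕜 := ℝ) ((Tmat α β (some (j, m, ℓ)))⁻¹ * Tmat α β none)‖
      ≤ 104 := by
  have ha : (1 : ℝ) ≤ 2 ^ (α * j) :=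
    Real.one_le_rpow one_le_two (mul_nonneg (hβ0.trans hβα) j.cast_nonneg)
  have hb : (1 : ℝ) ≤ 2 ^ (β * j) := Real.one_le_rpow one_le_two (by positivity)
  have hs := abs_sin_le_one (0 - Theta β j ℓ)
  rw [Tmat_none]
  exact norm_inv_Rmat_mul_diag_mul_le (by positivity) (by positivity) one_pos one_pos
    (by linarith) (by linarith) (by linarith) (by linarith)

theorem norm_transition_ball_Qset_le {α β ε : ℝ} (hβα : β ≤ α) (hα1 : α ≤ 1)
    (hε : ε < 1 / 32) {j m ℓ : ℕ} (hm : (m : ℤ) ≤ mjmax α j) {p : R2} (hp : ‖p‖ < 4)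
    (hp' : p ∈ Qset α β ε j m ℓ) :
    ‖Matrix.toEuclideanCLM (𝕜 := ℝ) ((Tmat α β none)⁻¹ * Tmat α β (some (j, m, ℓ)))‖
      ≤ 104 := by
  have hβ1 := hβα.trans hα1
  have hP : (2 : ℝ) ^ j ≤ 8 := by
    have := le_three_of_mem_ball_inter_Qset hβ1 hα1 hε hm hp hp'
    calc (2 : ℝ) ^ j ≤ 2 ^ 3 := pow_le_pow_right₀ one_le_two this
      _ = 8 := by norm_num
  have ha := two_rpow_mul_le_two_pow hα1 j
  have hb := two_rpow_mul_le_two_pow hβ1 j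
  have hs := abs_sin_le_one (Theta β j ℓ - 0)
  rw [Tmat_none]
  refine norm_inv_Rmat_mul_diag_mul_le one_pos one_pos (by positivity) (by positivity)
    (by linarith) (by linarith) ?_ ?_ <;>
  nlinarith [abs_nonneg (Real.sin (Theta β j ℓ - 0))]

/-- For all `i, i' ∈ I` with `Q_i ∩ Q_{i'} ≠ ∅`, the operator norm
(induced by the Euclidean norm on `ℝ²`) of `T_i⁻¹·T_{i'}` is at most `104`. -/
theorem wavePacket_transition_norm (α β ε : ℝ)
    (hβ0 : 0 ≤ β) (hβα : β ≤ α) (hα1 : α ≤ 1) (hε : ε ∈ Set.Ioo (0:ℝ) (1/32))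
    (i i' : Idx) (hi : memI α β i) (hi' : memI α β i')
    (h : (QsetI α β ε i ∩ QsetI α β ε i').Nonempty) :
    ‖Matrix.toEuclideanCLM (𝕜 := ℝ) ((Tmat α β i)⁻¹ * Tmat α β i')‖ ≤ 104 := by
  obtain ⟨p, hp, hp'⟩ := h
  rcases i with _ | ⟨j, m, ℓ⟩ <;> rcases i' with _ | ⟨j', m', ℓ'⟩
  · rw [Tmat_none]
    exact norm_inv_Rmat_mul_diag_mul_le one_pos one_pos one_pos one_pos (by norm_num)
      (by norm_num) (by simp) (by simp)
  · exact norm_transition_ball_Qset_le hβα hα1 hε.2 hi'.2.1 (mem_ball_zero_iff.1 hp) hp'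
  · exact norm_transition_Qset_ball_le hβ0 hβα j m ℓ
  · exact norm_transition_Qset_Qset_le hβ0 hβα hα1 hε.2 hi.2.1 hi'.2.1 hp hp'
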